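/- Let X be a finite set and let C and T be partitions of X. Then the two-sided expected mutual information under the permutation model equals the one-sided expectation: (1/(|perm(C)|·|perm(T)|)) · Σ_{C′∈perm(C)} Σ_{T′∈perm(T)} I(C′, T′) = (1/|perm(C)|) · Σ_{C′∈perm(C)} I(C′, T). -/
import Mathlib


open Finset Real

variable {X : Type*} [Fintype X] [DecidableEq X]

/-- A finite family of finsets of `X` is a partition of `X` if its blocks are
nonempty, pairwise disjoint, and cover `X`. -/
def IsPartition (P : Finset (Finset X)) : Prop :=
  (∀ B ∈ P, B.Nonempty) ∧
  (∀ B ∈ P, ∀ D ∈ P, B ≠ D → Disjoint B D) ∧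
  (∀ x : X, ∃ B ∈ P, x ∈ B)

instance : DecidablePred (IsPartition (X := X)) := fun _ => by
  unfold IsPartition; infer_instance

/-- The shape of a partition: the multiset of its block sizes. -/
def shape (P : Finset (Finset X)) : Multiset ℕ := P.val.map Finset.card

/-- The image `σ·P` of a partition under a permutation `σ` of `X`. -/
def pmap (σ : X ≃ X) (P : Finset (Finset X)) : Finset (Finset X) :=
  P.image (fun B => B.image σ)

/-- Entropy of a partition: `H(C) = -∑_{B ∈ C} (|B|/N) log (|B|/N)`. -/
noncomputable def entropy (C : Finset (Finset X)) : ℝ :=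
  -∑ B ∈ C, ((B.card : ℝ) / (Fintype.card X : ℝ)) *
    Real.log ((B.card : ℝ) / (Fintype.card X : ℝ))

/-- Mutual information of two partitions:
`I(C,T) = ∑_{B ∈ C} ∑_{D ∈ T} (|B∩D|/N) log (N |B∩D| / (|B| |D|))`
(summands with `B ∩ D = ∅` vanish since the first factor is `0`). -/
noncomputable def MI (C T : Finset (Finset X)) : ℝ :=
  ∑ B ∈ C, ∑ D ∈ T, (((B ∩ D).card : ℝ) / (Fintype.card X : ℝ)) *
    Real.log ((Fintype.card X : ℝ) * ((B ∩ D).card : ℝ) / ((B.card : ℝ) * (D.card : ℝ)))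

/-- The permutation random model `perm(C)`: all partitions of `X` with the same
shape as `C`. -/
def permModel (C : Finset (Finset X)) : Finset (Finset (Finset X)) :=
  Finset.univ.filter (fun P => IsPartition P ∧ shape P = shape C)

/-- The all-partitions random model `all(X)`: all partitions of `X`. -/
def allModel (X : Type*) [Fintype X] [DecidableEq X] : Finset (Finset (Finset X)) :=
  Finset.univ.filter (fun P => IsPartition P)

/-- Uniform average of `f` over a finite set `s`. -/
noncomputable def avg {α : Type*} (s : Finset α) (f : α → ℝ) : ℝ :=
  (∑ a ∈ s, f a) / s.card

lemma isPartition_pmap (σ : X ≃ X) {P : Finset (Finset X)} (hP : IsPartition P) :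
    IsPartition (pmap σ P) := by
  obtain ⟨h1, h2, h3⟩ := hP
  refine ⟨?_, ?_, ?_⟩
  · intro B hB
    obtain ⟨A, hA, rfl⟩ := Finset.mem_image.mp hB
    exact (h1 A hA).image σ
  · intro B hB D hD hBD
    obtain ⟨A, hA, rfl⟩ := Finset.mem_image.mp hB
    obtain ⟨A', hA', rfl⟩ := Finset.mem_image.mp hD
    have hne : A ≠ A' := fun h => hBD (by rw [h])
    exact (Finset.disjoint_image σ.injective).mpr (h2 A hA A' hA' hne)
  · intro x
    obtain ⟨B, hB, hx⟩ := h3 (σ.symm x)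
    refine ⟨B.image σ, Finset.mem_image_of_mem _ hB, ?_⟩
    simpa using Finset.mem_image_of_mem σ hx

lemma shape_pmap (σ : X ≃ X) (P : Finset (Finset X)) : shape (pmap σ P) = shape P := by
  unfold shape pmap
  rw [Finset.image_val_of_injOn ((Finset.image_injective σ.injective).injOn),
    Multiset.map_map]
  exact Multiset.map_congr rfl fun B _ => Finset.card_image_of_injective _ σ.injective

lemma pmap_mem_permModel (σ : X ≃ X) {P C : Finset (Finset X)} (h : P ∈ permModel C) :
    pmap σ P ∈ permModel C := by
  rw [permModel, Finset.mem_filter] at h ⊢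
  exact ⟨Finset.mem_univ _, isPartition_pmap σ h.2.1, (shape_pmap σ P).trans h.2.2⟩

lemma pmap_symm_pmap (σ : X ≃ X) (P : Finset (Finset X)) : pmap σ.symm (pmap σ P) = P := by
  simp only [pmap, Finset.image_image]
  have h : ((fun B : Finset X => B.image ⇑σ.symm) ∘ fun B : Finset X => B.image ⇑σ) = id := by
    funext B
    simp [Finset.image_image, Function.comp]
  rw [h, Finset.image_id]

lemma pmap_pmap_symm (σ : X ≃ X) (P : Finset (Finset X)) : pmap σ (pmap σ.symm P) = P := by
  simpa using pmap_symm_pmap σ.symm P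

lemma MI_pmap (σ : X ≃ X) (C T : Finset (Finset X)) : MI (pmap σ C) (pmap σ T) = MI C T := by
  unfold MI pmap
  rw [Finset.sum_image (fun B _ D _ h => Finset.image_injective σ.injective h)]
  refine Finset.sum_congr rfl fun B _ => ?_
  rw [Finset.sum_image (fun B _ D _ h => Finset.image_injective σ.injective h)]
  refine Finset.sum_congr rfl fun D _ => ?_
  rw [← Finset.image_inter _ _ σ.injective, Finset.card_image_of_injective _ σ.injective,
    Finset.card_image_of_injective _ σ.injective, Finset.card_image_of_injective _ σ.injective]

/-- If two functions to `ℕ` have fibers of equal cardinalities, there is an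
equivalence intertwining them. -/
lemma exists_equiv_of_fiber_card_eq {α β : Type*} [Fintype α] [Fintype β]
    (f : α → ℕ) (g : β → ℕ)
    (h : ∀ n, Fintype.card {a // f a = n} = Fintype.card {b // g b = n}) :
    ∃ E : α ≃ β, ∀ a, g (E a) = f a := by
  refine ⟨(Equiv.sigmaFiberEquiv f).symm.trans
    ((Equiv.sigmaCongrRight fun n => Fintype.equivOfCardEq (h n)).trans
      (Equiv.sigmaFiberEquiv g)), fun a => ?_⟩
  exact ((Fintype.equivOfCardEq (h (f a))) ⟨a, rfl⟩).2

/-- A partition of `X` induces an equivalence between the sigma type of its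
blocks and `X`. -/
lemma exists_partition_sigma_equiv (P : Finset (Finset X)) (hP : IsPartition P) :
    ∃ e : (Σ B : {B // B ∈ P}, {x // x ∈ (B : Finset X)}) ≃ X, ∀ p, e p = p.2.1 := by
  have hbij : Function.Bijective
      (fun p : (Σ B : {B // B ∈ P}, {x // x ∈ (B : Finset X)}) => (p.2.1 : X)) := by
    constructor
    · rintro ⟨⟨B, hB⟩, ⟨x, hx⟩⟩ ⟨⟨D, hD⟩, ⟨y, hy⟩⟩ (hxy : x = y)
      subst hxy
      have hBD : B = D := by
        by_contra hne
        exact (Finset.disjoint_left.mp (hP.2.1 B hB D hD hne) hx) hy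
      subst hBD; rfl
    · intro x
      obtain ⟨B, hB, hx⟩ := hP.2.2 x
      exact ⟨⟨⟨B, hB⟩, ⟨x, hx⟩⟩, rfl⟩
  exact ⟨Equiv.ofBijective _ hbij, fun p => rfl⟩

/-- Two partitions of the same shape are related by a permutation of `X`. -/
lemma exists_pmap_eq (P Q : Finset (Finset X)) (hP : IsPartition P) (hQ : IsPartition Q)
    (h : shape P = shape Q) : ∃ σ : X ≃ X, pmap σ P = Q := by
  -- fibers of the card function on blocks have equal sizes
  have hcount : ∀ n : ℕ, (P.filter fun B => B.card = n).card
      = (Q.filter fun B => B.card = n).card := by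
    intro n
    have h' := congrArg (Multiset.count n) h
    rw [shape, shape, Multiset.count_map, Multiset.count_map] at h'
    have hconv : ∀ (v : Multiset (Finset X)),
        Multiset.card (v.filter fun a => n = a.card)
          = Multiset.card (v.filter fun a => a.card = n) := by
      intro v
      congr 1
      exact Multiset.filter_congr fun a _ => eq_comm
    rw [hconv, hconv] at h'
    exact h'
  have hfibgen : ∀ (R : Finset (Finset X)) (n : ℕ),
      Fintype.card {B : {B // B ∈ R} // (B : Finset X).card = n}
        = (R.filter fun B => B.card = n).card := by
    intro R n
    rw [← Fintype.card_coe]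
    refine Fintype.card_congr ⟨fun B => ⟨B.1.1, Finset.mem_filter.mpr ⟨B.1.2, B.2⟩⟩,
      fun B => ⟨⟨B.1, (Finset.mem_filter.mp B.2).1⟩, (Finset.mem_filter.mp B.2).2⟩,
      ?_, ?_⟩
    · rintro ⟨⟨B, h1⟩, h2⟩; rfl
    · rintro ⟨B, hB⟩; rfl
  have hfib : ∀ n, Fintype.card {B : {B // B ∈ P} // (fun B : {B // B ∈ P} =>
      (B : Finset X).card) B = n}
      = Fintype.card {D : {D // D ∈ Q} // (fun D : {D // D ∈ Q} =>
      (D : Finset X).card) D = n} := by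
    intro n
    rw [hfibgen P n, hfibgen Q n, hcount n]
  obtain ⟨E, hE⟩ := exists_equiv_of_fiber_card_eq _ _ hfib
  obtain ⟨eP, heP⟩ := exists_partition_sigma_equiv P hP
  obtain ⟨eQ, heQ⟩ := exists_partition_sigma_equiv Q hQ
  have hEcard : ∀ B : {B // B ∈ P}, ((E B : {D // D ∈ Q}) : Finset X).card
      = (B : Finset X).card := hE
  let F : ∀ B : {B // B ∈ P},
      {x // x ∈ (B : Finset X)} ≃ {x // x ∈ ((E B : {D // D ∈ Q}) : Finset X)} :=
    fun B => Finset.equivOfCardEq (hEcard B).symm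
  let G : (Σ B : {B // B ∈ P}, {x // x ∈ (B : Finset X)})
      ≃ (Σ D : {D // D ∈ Q}, {x // x ∈ (D : Finset X)}) := Equiv.sigmaCongr E F
  let σ : X ≃ X := eP.symm.trans (G.trans eQ)
  have key : ∀ B (hB : B ∈ P), ∀ x ∈ B,
      σ x ∈ ((E ⟨B, hB⟩ : {D // D ∈ Q}) : Finset X) := by
    intro B hB x hx
    set p := eP.symm x with hpdef
    have hpx : (p.2.1 : X) = x := by rw [← heP p, hpdef, Equiv.apply_symm_apply]
    have hp1 : p.1 = ⟨B, hB⟩ := by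
      have hxp : x ∈ (p.1 : Finset X) := hpx ▸ p.2.2
      by_contra hne
      have hne' : (p.1 : Finset X) ≠ B := fun hEq => hne (Subtype.ext hEq)
      exact (Finset.disjoint_left.mp (hP.2.1 _ p.1.2 B hB hne') hxp) hx
    have hσ : σ x = (G p).2.1 := heQ (G p)
    rw [hσ]
    have h1 : (G p).1 = E ⟨B, hB⟩ := by
      rw [show (G p).1 = E p.1 from rfl, hp1]
    have h2 := (G p).2.2
    rw [← h1]
    exact h2
  have himg : ∀ B (hB : B ∈ P),
      B.image σ = ((E ⟨B, hB⟩ : {D // D ∈ Q}) : Finset X) := by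
    intro B hB
    apply Finset.eq_of_subset_of_card_le
    · intro y hy
      obtain ⟨x, hx, rfl⟩ := Finset.mem_image.mp hy
      exact key B hB x hx
    · rw [Finset.card_image_of_injective _ σ.injective, hEcard]
  refine ⟨σ, ?_⟩
  ext D
  simp only [pmap, Finset.mem_image]
  constructor
  · rintro ⟨B, hB, rfl⟩
    rw [himg B hB]
    exact (E ⟨B, hB⟩).2
  · intro hD
    refine ⟨(E.symm ⟨D, hD⟩ : Finset X), (E.symm ⟨D, hD⟩).2, ?_⟩
    rw [himg _ (E.symm ⟨D, hD⟩).2]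
    simp

theorem stmt4 (hN : 1 ≤ Fintype.card X)
    (C T : Finset (Finset X)) (hC : IsPartition C) (hT : IsPartition T) :
    (∑ Cp ∈ permModel C, ∑ Tp ∈ permModel T, MI Cp Tp) /
        (((permModel C).card : ℝ) * ((permModel T).card : ℝ)) =
      (∑ Cp ∈ permModel C, MI Cp T) / ((permModel C).card : ℝ) := by
  have hCmem : C ∈ permModel C := Finset.mem_filter.mpr ⟨Finset.mem_univ _, hC, rfl⟩
  have hTmem : T ∈ permModel T := Finset.mem_filter.mpr ⟨Finset.mem_univ _, hT, rfl⟩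
  have key : ∀ Tp ∈ permModel T,
      (∑ Cp ∈ permModel C, MI Cp Tp) = ∑ Cp ∈ permModel C, MI Cp T := by
    intro Tp hTp
    obtain ⟨hTpPart, hTpShape⟩ := (Finset.mem_filter.mp hTp).2
    obtain ⟨σ, hσ⟩ := exists_pmap_eq T Tp hT hTpPart hTpShape.symm
    refine Finset.sum_bij' (fun Cp _ => pmap σ.symm Cp) (fun Cp _ => pmap σ Cp)
      (fun a ha => pmap_mem_permModel _ ha) (fun a ha => pmap_mem_permModel _ ha)
      (fun a _ => pmap_pmap_symm σ a) (fun a _ => pmap_symm_pmap σ a) ?_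
    intro a _
    calc MI a Tp = MI (pmap σ (pmap σ.symm a)) (pmap σ T) := by
          rw [pmap_pmap_symm, hσ]
      _ = MI (pmap σ.symm a) T := MI_pmap σ _ _
  rw [Finset.sum_comm, Finset.sum_congr rfl key, Finset.sum_const, nsmul_eq_mul]
  have hTcard : ((permModel T).card : ℝ) ≠ 0 :=
    Nat.cast_ne_zero.mpr (Finset.card_ne_zero_of_mem hTmem)
  have hCcard : ((permModel C).card : ℝ) ≠ 0 :=
    Nat.cast_ne_zero.mpr (Finset.card_ne_zero_of_mem hCmem)
  field_simp
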